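/- arXiv:2504.10223 — 5 statements merged into one kernel-verified Lean document; each statement's English description precedes it below -/
import Mathlib

section
/- Let p₀, ..., pₙ be complex numbers, not all zero, and define hₖ := Σ_{j=0}^{n-k} p_{j+k} · conj(p_j) for k = 0, ..., n. Then the polynomial H(z) := h₀ + 2·Σ_{k=1}^n hₖ zᵏ satisfies Re H(e^{iφ}) = |Σ_{k=0}^n pₖ e^{ikφ}|² ≥ 0 for all real φ. -/
/-!
For `‖z‖ = 1`, expanding `‖∑ pₖ zᵏ‖²` gives `∑_{a,b} p_a conj(p_b) z^(a-b)`. The diagonal is `h₀`,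
and the terms with `a < b` are the conjugates of those with `a > b`, so the real part of the
whole sum is `h₀ + 2 Re ∑_{k ≥ 1} hₖ zᵏ`.
-/

open Complex Finset
open scoped ComplexConjugate

theorem Finset.sum_range_sum_range_eq_sum_Icc_sum_range {M : Type*} [AddCommMonoid M] (n : ℕ)
    (f : ℕ → ℕ → M) :
    ∑ a ∈ range (n + 1), ∑ b ∈ range a, f a b
      = ∑ k ∈ Icc 1 n, ∑ j ∈ range (n - k + 1), f (j + k) j := by
  rw [sum_sigma', sum_sigma']
  refine sum_bij' (fun x _ => ⟨x.1 - x.2, x.2⟩) (fun y _ => ⟨y.2 + y.1, y.2⟩) ?_ ?_ ?_ ?_ ?_ <;>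
    rintro ⟨a, b⟩ hab <;>
    simp only [mem_sigma, mem_range, mem_Icc, Sigma.mk.injEq, heq_eq_eq, and_true] at hab ⊢
  all_goals first | omega | (congr 1; omega)

theorem RCLike.norm_sum_range_sq {K : Type*} [RCLike K] (q : ℕ → K) (N : ℕ) :
    ‖∑ a ∈ range N, q a‖ ^ 2
      = ∑ a ∈ range N, ‖q a‖ ^ 2
        + 2 * RCLike.re (∑ a ∈ range N, ∑ b ∈ range a, q a * conj (q b)) := by
  induction N with
  | zero => simp
  | succ N ih =>
    have hcross : ∑ b ∈ range N, q N * conj (q b) = q N * conj (∑ b ∈ range N, q b) := by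
      rw [map_sum, mul_sum]
    simp only [sum_range_succ, map_add, hcross] at ih ⊢
    rw [add_comm (∑ x ∈ range N, q x), ← RCLike.normSq_eq_def', RCLike.normSq_add,
      RCLike.normSq_eq_def', RCLike.normSq_eq_def', ih]
    ring

theorem mul_pow_mul_conj_mul_pow_of_norm_eq_one {z : ℂ} (hz : ‖z‖ = 1) (x y : ℂ) {a b : ℕ}
    (hba : b ≤ a) : x * z ^ a * conj (y * z ^ b) = x * conj y * z ^ (a - b) := by
  have hzb : z ^ b * conj (z ^ b) = 1 := by
    rw [mul_conj, normSq_eq_norm_sq, norm_pow, hz]; simp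
  rw [← Nat.sub_add_cancel hba, pow_add, map_mul, Nat.add_sub_cancel]
  linear_combination x * conj y * z ^ (a - b) * hzb

def autocorrelation (p : ℕ → ℂ) (n k : ℕ) : ℂ :=
  ∑ j ∈ range (n - k + 1), p (j + k) * conj (p j)

theorem norm_sum_range_mul_pow_sq_eq_re {z : ℂ} (hz : ‖z‖ = 1) (p : ℕ → ℂ) (n : ℕ) :
    ‖∑ k ∈ range (n + 1), p k * z ^ k‖ ^ 2
      = (autocorrelation p n 0 + 2 * ∑ k ∈ Icc 1 n, autocorrelation p n k * z ^ k).re := by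
  have hdiag : ∑ k ∈ range (n + 1), ‖p k * z ^ k‖ ^ 2 = (autocorrelation p n 0).re := by
    simp only [autocorrelation, re_sum, RCLike.mul_conj, norm_mul, norm_pow, hz, one_pow,
      mul_one, Nat.sub_zero, Nat.add_zero]
    norm_cast
  have hcross :
      ∑ k ∈ Icc 1 n, ∑ j ∈ range (n - k + 1), p (j + k) * z ^ (j + k) * conj (p j * z ^ j)
        = ∑ k ∈ Icc 1 n, autocorrelation p n k * z ^ k := by
    refine sum_congr rfl fun k _ => ?_
    rw [autocorrelation, sum_mul]
    refine sum_congr rfl fun j _ => ?_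
    rw [mul_pow_mul_conj_mul_pow_of_norm_eq_one hz _ _ (Nat.le_add_right j k),
      Nat.add_sub_cancel_left]
  rw [RCLike.norm_sum_range_sq, sum_range_sum_range_eq_sum_Icc_sum_range, hdiag, hcross]
  simp

theorem stmt_2_general (n : ℕ) (p : ℕ → ℂ)
    (h : ℕ → ℂ)
    (hh : ∀ k, h k = ∑ j ∈ Finset.range (n - k + 1), p (j + k) * (starRingEnd ℂ) (p j))
    (H : ℂ → ℂ)
    (hH : ∀ z : ℂ, H z = h 0 + 2 * ∑ k ∈ Finset.Icc 1 n, h k * z ^ k) :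
    ∀ φ : ℝ,
      (H (Complex.exp (Complex.I * φ))).re
          = ‖∑ k ∈ Finset.range (n + 1), p k * Complex.exp (Complex.I * k * φ)‖ ^ 2 ∧
      0 ≤ (H (Complex.exp (Complex.I * φ))).re := by
  intro φ
  have hexp (k : ℕ) : exp (I * k * φ) = exp (I * φ) ^ k := by
    rw [← exp_nat_mul]; ring_nf
  have hre : (H (exp (I * φ))).re
      = ‖∑ k ∈ range (n + 1), p k * exp (I * k * φ)‖ ^ 2 := by
    have hcoeff : h = autocorrelation p n := funext hh
    simp only [hexp, hH, hcoeff]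
    exact (norm_sum_range_mul_pow_sq_eq_re (norm_exp_I_mul_ofReal φ) p n).symm
  exact ⟨hre, hre ▸ by positivity⟩

theorem stmt_2 (n : ℕ) (p : ℕ → ℂ) (hp : ∃ k ≤ n, p k ≠ 0)
    (h : ℕ → ℂ)
    (hh : ∀ k, h k = ∑ j ∈ Finset.range (n - k + 1), p (j + k) * (starRingEnd ℂ) (p j))
    (H : ℂ → ℂ)
    (hH : ∀ z : ℂ, H z = h 0 + 2 * ∑ k ∈ Finset.Icc 1 n, h k * z ^ k) :
    ∀ φ : ℝ,
      (H (Complex.exp (Complex.I * φ))).re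
          = ‖∑ k ∈ Finset.range (n + 1), p k * Complex.exp (Complex.I * k * φ)‖ ^ 2 ∧
      0 ≤ (H (Complex.exp (Complex.I * φ))).re :=
  stmt_2_general n p h hh H hH
end

section
/- Let p₀, ..., pₙ be complex numbers, not all zero, and define hₖ := Σ_{j=0}^{n-k} p_{j+k} · conj(p_j) for k = 0, ..., n. Then the polynomial H(z) := h₀ + 2·Σ_{k=1}^n hₖ zᵏ has Re H(z) > 0 for all z in the open unit disk, provided H(0) = h₀ > 0. -/
/-!
Write `q j = ∑ₘ p (m + j) zᵐ` for the tails of `P(z) = ∑ⱼ pⱼ zʲ`, so that `q j = p j + z q (j + 1)`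
and `q (n + 1) = 0`. Exchanging summations, `∑ₖ hₖ zᵏ = z ∑ⱼ q (j + 1) conj (p j)`, and expanding
`|q j|² = |p j + z q (j + 1)|²` and telescoping gives
`Re H(z) = (1 - |z|²) ∑ⱼ |q j|² + |z|² |q 0|²`.
The tails cannot all vanish, since they determine the `pⱼ`, so this is positive on the unit disk.
-/

open Complex Finset Metric

noncomputable section

def autocorr (p : ℕ → ℂ) (n k : ℕ) : ℂ :=
  ∑ j ∈ range (n - k + 1), p (j + k) * (starRingEnd ℂ) (p j)

def autocorrPoly (p : ℕ → ℂ) (n : ℕ) (z : ℂ) : ℂ :=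
  autocorr p n 0 + 2 * ∑ k ∈ Icc 1 n, autocorr p n k * z ^ k

def polyTail (p : ℕ → ℂ) (n : ℕ) (z : ℂ) (j : ℕ) : ℂ :=
  ∑ m ∈ range (n + 1 - j), p (m + j) * z ^ m

end

section

variable (p : ℕ → ℂ) (n : ℕ) (z : ℂ)

theorem polyTail_eq_add_mul_polyTail_succ {j : ℕ} (hj : j ≤ n) :
    polyTail p n z j = p j + z * polyTail p n z (j + 1) := by
  rw [polyTail, polyTail, show n + 1 - j = n - j + 1 by omega,
    show n + 1 - (j + 1) = n - j by omega, sum_range_succ', mul_sum, add_comm]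
  congr 1
  · simp
  · refine sum_congr rfl fun m _ => ?_
    rw [show m + 1 + j = m + (j + 1) by omega]
    ring

@[simp]
theorem polyTail_succ_self : polyTail p n z (n + 1) = 0 := by
  simp [polyTail]

theorem re_autocorr_zero : (autocorr p n 0).re = ∑ j ∈ range (n + 1), normSq (p j) := by
  simp [autocorr, re_sum, mul_conj]

theorem sum_autocorr_mul_pow :
    ∑ k ∈ Icc 1 n, autocorr p n k * z ^ k
      = ∑ j ∈ range (n + 1), z * polyTail p n z (j + 1) * (starRingEnd ℂ) (p j) := by
  rw [← Ico_add_one_right_eq_Icc, sum_Ico_eq_sum_range]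
  simp only [autocorr, polyTail, sum_mul, mul_sum, show n + 1 - 1 = n from rfl,
    fun j : ℕ => show n + 1 - (j + 1) = n - j by omega]
  rw [sum_comm' (t' := range (n + 1)) (s' := fun j => range (n - j))]
  · refine sum_congr rfl fun j _ => sum_congr rfl fun m _ => ?_
    rw [show j + (1 + m) = m + (j + 1) by omega]
    ring
  · intro k j
    simp only [mem_range]
    omega

theorem two_mul_re_mul_polyTail_mul_conj {j : ℕ} (hj : j ≤ n) :
    2 * (z * polyTail p n z (j + 1) * (starRingEnd ℂ) (p j)).re
      = normSq (polyTail p n z j) - normSq (p j)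
        - normSq z * normSq (polyTail p n z (j + 1)) := by
  rw [polyTail_eq_add_mul_polyTail_succ p n z hj, normSq_add, normSq_mul]
  simp only [mul_re, conj_re, conj_im]
  ring

theorem re_autocorrPoly_eq :
    (autocorrPoly p n z).re
      = (1 - normSq z) * ∑ j ∈ range (n + 1), normSq (polyTail p n z j)
        + normSq z * normSq (polyTail p n z 0) := by
  have hshift : ∑ j ∈ range (n + 1), normSq (polyTail p n z (j + 1))
      = ∑ j ∈ range (n + 1), normSq (polyTail p n z j) - normSq (polyTail p n z 0) := by
    have h := sum_range_succ' (fun j => normSq (polyTail p n z j)) (n + 1)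
    rw [sum_range_succ (fun j => normSq (polyTail p n z j)), polyTail_succ_self, map_zero,
      add_zero] at h
    linarith
  rw [autocorrPoly, sum_autocorr_mul_pow, add_re, re_autocorr_zero, mul_re, re_ofNat, im_ofNat,
    zero_mul, sub_zero, re_sum, mul_sum, sum_congr rfl fun j hj =>
      two_mul_re_mul_polyTail_mul_conj p n z (Nat.lt_succ_iff.mp (mem_range.mp hj)),
    sum_sub_distrib, sum_sub_distrib, ← mul_sum, hshift]
  ring

theorem exists_polyTail_ne_zero (hp : ∃ k ≤ n, p k ≠ 0) :
    ∃ j ≤ n, polyTail p n z j ≠ 0 := by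
  by_contra! htail
  obtain ⟨k, hk, hpk⟩ := hp
  apply hpk
  have hnext : polyTail p n z (k + 1) = 0 := by
    rcases hk.lt_or_eq with hlt | rfl
    · exact htail _ hlt
    · exact polyTail_succ_self p k z
  simpa [hnext, htail k hk] using (polyTail_eq_add_mul_polyTail_succ p n z hk).symm

theorem re_autocorrPoly_pos (hp : ∃ k ≤ n, p k ≠ 0) (hz : ‖z‖ < 1) :
    0 < (autocorrPoly p n z).re := by
  obtain ⟨j, hj, hqj⟩ := exists_polyTail_ne_zero p n z hp
  have hsum : 0 < ∑ j ∈ range (n + 1), normSq (polyTail p n z j) :=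
    lt_of_lt_of_le (normSq_pos.mpr hqj) <|
      single_le_sum (fun j _ => normSq_nonneg _) (mem_range.mpr (Nat.lt_succ_of_le hj))
  have hz2 : normSq z < 1 := by
    rw [normSq_eq_norm_sq]
    exact pow_lt_one₀ (norm_nonneg z) hz two_ne_zero
  rw [re_autocorrPoly_eq]
  exact add_pos_of_pos_of_nonneg (mul_pos (sub_pos.mpr hz2) hsum)
    (mul_nonneg (normSq_nonneg z) (normSq_nonneg _))

end

theorem stmt_3_general (n : ℕ) (p : ℕ → ℂ) (hp : ∃ k ≤ n, p k ≠ 0)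
    (h : ℕ → ℂ)
    (hh : ∀ k, h k = ∑ j ∈ Finset.range (n - k + 1), p (j + k) * (starRingEnd ℂ) (p j))
    (H : ℂ → ℂ)
    (hH : ∀ z : ℂ, H z = h 0 + 2 * ∑ k ∈ Finset.Icc 1 n, h k * z ^ k) :
    ∀ z ∈ ball (0 : ℂ) 1, 0 < (H z).re := by
  intro z hz
  obtain rfl : h = autocorr p n := funext hh
  obtain rfl : H = autocorrPoly p n := funext hH
  exact re_autocorrPoly_pos p n z hp (mem_ball_zero_iff.mp hz)

theorem stmt_3 (n : ℕ) (p : ℕ → ℂ) (hp : ∃ k ≤ n, p k ≠ 0)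
    (h : ℕ → ℂ)
    (hh : ∀ k, h k = ∑ j ∈ Finset.range (n - k + 1), p (j + k) * (starRingEnd ℂ) (p j))
    (H : ℂ → ℂ)
    (hH : ∀ z : ℂ, H z = h 0 + 2 * ∑ k ∈ Finset.Icc 1 n, h k * z ^ k)
    (hpos : 0 < (H 0).re) :
    ∀ z ∈ ball (0 : ℂ) 1, 0 < (H z).re :=
  stmt_3_general n p hp h hh H hH
end

section
/- Let H(z) = h₀ + 2·Σ_{k=1}^n hₖ zᵏ with h₀ > 0, hₙ > 0, Re H ≥ 0 on the closed unit disk, and suppose all n roots of H lie on the unit circle. Then H(z) = h₀(1 + zⁿ). -/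
/-!
Evaluating the factorisation at `0` gives `h₀ = 2hₙ ∏ (-r k)`, and taking norms `2hₙ = h₀`.
Since the roots lie on the unit circle, `H` is then self-inversive: `zⁿ conj (H z) = H z` for
`‖z‖ = 1`. So `H (e^{it}) = e^{int/2} g t` with `g` real and continuous, and `Re H ≥ 0` on the
circle reads `cos (nt/2) g t ≥ 0`. As `cos (nt/2)` changes sign at each of its zeros, `g` vanishes
there, i.e. `H` vanishes at the `n` distinct roots of `zⁿ = -1`. The polynomial `H - h₀ (1 + zⁿ)`
has degree `< n`, hence is zero.
-/

open Complex Finset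

open ComplexConjugate Polynomial Topology

theorem Complex.card_nthRootsFinset {n : ℕ} (hn : n ≠ 0) {a : ℂ} (ha : a ≠ 0) :
    #(nthRootsFinset n a) = n := by
  classical
  have hζ := Complex.isPrimitiveRoot_exp n hn
  obtain ⟨α, hα⟩ := IsAlgClosed.exists_pow_nat_eq a (Nat.pos_of_ne_zero hn)
  rw [nthRootsFinset_def, Multiset.toFinset_card_of_nodup (hζ.nthRoots_nodup ha),
    hζ.card_nthRoots, if_pos ⟨α, hα⟩]

theorem Polynomial.eq_zero_of_degree_lt_of_eval_nthRoots_eq_zero {n : ℕ} (hn : n ≠ 0) {a : ℂ}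
    (ha : a ≠ 0) {p : ℂ[X]} (hp : p.degree < n) (h : ∀ z, z ^ n = a → p.eval z = 0) : p = 0 :=
  eq_zero_of_degree_lt_of_eval_finset_eq_zero _ (by rwa [Complex.card_nthRootsFinset hn ha])
    fun z hz => h z ((mem_nthRootsFinset (Nat.pos_of_ne_zero hn) a).1 hz)

theorem eq_zero_of_mul_nonneg_of_hasDerivAt {f g : ℝ → ℝ} {t₀ f' : ℝ}
    (hfg : ∀ᶠ t in 𝓝 t₀, 0 ≤ f t * g t) (hg : ContinuousAt g t₀) (hf : HasDerivAt f f' t₀)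
    (hf' : f' ≠ 0) (hf₀ : f t₀ = 0) : g t₀ = 0 := by
  by_contra hne
  rcases lt_or_gt_of_ne hne with hneg | hpos
  · have hmax : IsLocalMax f t₀ := by
      filter_upwards [hfg, hg.eventually_lt_const hneg] with t hfgt hgt
      rw [hf₀]
      exact nonpos_of_mul_nonneg_left hfgt hgt
    exact hf' (hmax.hasDerivAt_eq_zero hf)
  · have hmin : IsLocalMin f t₀ := by
      filter_upwards [hfg, hg.eventually_const_lt hpos] with t hfgt hgt
      rw [hf₀]
      exact nonneg_of_mul_nonneg_left hfgt hgt
    exact hf' (hmin.hasDerivAt_eq_zero hf)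

namespace Complex

theorem mul_conj_eq_one_of_norm_eq_one {z : ℂ} (hz : ‖z‖ = 1) : z * conj z = 1 := by
  rw [mul_conj', hz]; simp

theorem mul_conj_sub_eq {z r : ℂ} (hz : ‖z‖ = 1) (hr : ‖r‖ = 1) :
    z * conj (z - r) = conj (-r) * (z - r) := by
  rw [map_sub, map_neg]
  linear_combination mul_conj_eq_one_of_norm_eq_one hz - mul_conj_eq_one_of_norm_eq_one hr

theorem pow_card_mul_conj_prod_sub {ι : Type*} [Fintype ι] {z : ℂ} {r : ι → ℂ} (hz : ‖z‖ = 1)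
    (hr : ∀ k, ‖r k‖ = 1) :
    z ^ Fintype.card ι * conj (∏ k, (z - r k)) = conj (∏ k, (0 - r k)) * ∏ k, (z - r k) := by
  simp only [map_prod, zero_sub, ← prod_mul_distrib, ← card_univ, ← prod_const]
  exact prod_congr rfl fun k _ => mul_conj_sub_eq hz (hr k)

theorem im_conj_mul_eq_zero_of_sq_mul_conj_eq {u a : ℂ} (hu : ‖u‖ = 1) (ha : u ^ 2 * conj a = a) :
    (conj u * a).im = 0 := by
  rw [← conj_eq_iff_im, map_mul, conj_conj]
  linear_combination conj u * ha - u * conj a * mul_conj_eq_one_of_norm_eq_one hu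

theorem re_eq_re_mul_re_conj_mul {u a : ℂ} (hu : ‖u‖ = 1) (ha : (conj u * a).im = 0) :
    a.re = u.re * (conj u * a).re := by
  conv_lhs => rw [← one_mul a, ← mul_conj_eq_one_of_norm_eq_one hu, mul_assoc]
  rw [mul_re, ha, mul_zero, sub_zero]

theorem re_eq_zero_of_sq_eq_neg_one {u : ℂ} (hu : u ^ 2 = -1) : u.re = 0 := by
  rcases sq_eq_sq_iff_eq_or_eq_neg.1 (hu.trans I_sq.symm) with rfl | rfl <;> simp

end Complex

theorem eq_zero_of_pow_eq_neg_one_of_self_inversive {F : ℂ → ℂ} {n : ℕ} (hF : Continuous F)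
    (hsi : ∀ z, ‖z‖ = 1 → z ^ n * conj (F z) = F z) (hre : ∀ z, ‖z‖ = 1 → 0 ≤ (F z).re)
    {z : ℂ} (hz : z ^ n = -1) : F z = 0 := by
  have hn : n ≠ 0 := by rintro rfl; norm_num at hz
  have hz1 : ‖z‖ = 1 := by
    have := congrArg norm hz
    rwa [norm_pow, norm_neg, norm_one, pow_eq_one_iff_of_nonneg (norm_nonneg z) hn] at this
  set e : ℝ → ℂ := fun t => exp (t * I)
  set u : ℝ → ℂ := fun t => exp ((n * t / 2 : ℝ) * I)
  have hue : ∀ t, u t ^ 2 = e t ^ n := fun t => by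
    simp only [u, e, ← exp_nat_mul]; push_cast; ring_nf
  have him : ∀ t, (conj (u t) * F (e t)).im = 0 := fun t =>
    im_conj_mul_eq_zero_of_sq_mul_conj_eq (norm_exp_ofReal_mul_I _)
      (by rw [hue, hsi _ (norm_exp_ofReal_mul_I t)])
  set g : ℝ → ℝ := fun t => (conj (u t) * F (e t)).re
  have hfg : ∀ t, 0 ≤ Real.cos (n * t / 2) * g t := fun t => by
    rw [← exp_ofReal_mul_I_re, ← re_eq_re_mul_re_conj_mul (norm_exp_ofReal_mul_I _) (him t)]
    exact hre _ (norm_exp_ofReal_mul_I t)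
  set t₀ := z.arg
  have he : e t₀ = z := by simpa [hz1] using norm_mul_exp_arg_mul_I z
  have hcos : Real.cos (n * t₀ / 2) = 0 := by
    rw [← exp_ofReal_mul_I_re]
    exact re_eq_zero_of_sq_eq_neg_one (by rw [hue, he, hz])
  have hsin : Real.sin (n * t₀ / 2) ≠ 0 := by
    intro hsin
    simpa [hcos, hsin] using Real.sin_sq_add_cos_sq (n * t₀ / 2)
  have hderiv : HasDerivAt (fun t => Real.cos (n * t / 2)) (-Real.sin (n * t₀ / 2) * (n / 2)) t₀ :=
    (Real.hasDerivAt_cos _).comp t₀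
      (by simpa using ((hasDerivAt_id t₀).const_mul (n : ℝ)).div_const 2)
  have hg : g t₀ = 0 :=
    eq_zero_of_mul_nonneg_of_hasDerivAt (.of_forall hfg) (by fun_prop) hderiv
      (mul_ne_zero (neg_ne_zero.2 hsin) (by positivity)) hcos
  have : conj (u t₀) * F z = 0 := by rw [← he]; exact Complex.ext hg (him t₀)
  simpa [u, exp_ne_zero] using this

theorem stmt_6 (n : ℕ) (hn : 1 ≤ n) (h₀ : ℝ) (h : ℕ → ℂ)
    (H : ℂ → ℂ)
    (hH : ∀ z : ℂ, H z = (h₀ : ℂ) + 2 * ∑ k ∈ Finset.Icc 1 n, h k * z ^ k)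
    (hpos : 0 < h₀) (hnim : (h n).im = 0) (hnpos : 0 < (h n).re)
    (hre : ∀ z : ℂ, ‖z‖ ≤ 1 → 0 ≤ (H z).re)
    (r : Fin n → ℂ) (hr : ∀ k, ‖r k‖ = 1)
    (hfact : ∀ w : ℂ, H w = 2 * h n * ∏ k, (w - r k)) :
    ∀ z : ℂ, H z = (h₀ : ℂ) * (1 + z ^ n) := by
  have hH0 : H 0 = h₀ := by
    rw [hH, sum_eq_zero fun k hk => by simp [Nat.one_le_iff_ne_zero.1 (mem_Icc.1 hk).1]]
    simp
  have hlead : 2 * h n = h₀ := by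
    have hnorm := congrArg norm (hfact 0)
    rw [hH0, norm_mul, norm_prod, prod_eq_one fun k _ => by rw [zero_sub, norm_neg, hr], mul_one,
      norm_real, Real.norm_of_nonneg hpos.le, norm_mul, RCLike.norm_ofNat] at hnorm
    have hreal : h n = ((h n).re : ℂ) := Complex.ext rfl (by simpa using hnim)
    rw [hreal, norm_real, Real.norm_of_nonneg hnpos.le] at hnorm
    rw [hreal, hnorm]
    push_cast
    ring
  have hsi : ∀ z, ‖z‖ = 1 → z ^ n * conj (H z) = H z := fun z hz => by
    have := pow_card_mul_conj_prod_sub hz hr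
    rw [Fintype.card_fin] at this
    rw [hfact, map_mul, mul_left_comm, this, ← mul_assoc, ← map_mul, ← hfact, hH0, conj_ofReal,
      hlead]
  have hroots : ∀ z, z ^ n = -1 → H z = 0 := fun z =>
    eq_zero_of_pow_eq_neg_one_of_self_inversive (by rw [funext hH]; fun_prop) hsi
      (fun z hz => hre z hz.le)
  set p : ℂ[X] := ∑ k ∈ Ico 1 n, C (h k) * X ^ k
  have hHp : ∀ z, H z = h₀ * (1 + z ^ n) + 2 * p.eval z := fun z => by
    rw [hH, ← Ico_insert_right hn, sum_insert (by simp), eval_finsetSum]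
    simp only [eval_mul, eval_C, eval_pow, eval_X]
    linear_combination z ^ n * hlead
  have hp : p = 0 := by
    refine eq_zero_of_degree_lt_of_eval_nthRoots_eq_zero (Nat.one_le_iff_ne_zero.1 hn)
      (neg_ne_zero.2 one_ne_zero) ?_ fun z hz => ?_
    · rw [← mem_degreeLT]
      exact Submodule.sum_mem _ fun k hk => mem_degreeLT.2 <|
        (degree_C_mul_X_pow_le _ _).trans_lt (by exact_mod_cast (mem_Ico.1 hk).2)
    · have := hroots z hz
      rw [hHp, hz] at this
      simpa using this
  intro z
  simp [hHp, hp]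
end

section
/- Fix n ≥ 1 and suppose f ∈ B maximizes Re{f}_n over all functions in B, with {f}_n > 0. Then for every holomorphic g on the unit disk with Re g > 0, one has Re(Σ_{k=0}^n {f}_{n−k}·{g}_k) ≥ 0. -/
open Complex Metric Finset

/-- The n-th Taylor coefficient of `f` at `0`. -/
noncomputable def taylorCoeff (f : ℂ → ℂ) (n : ℕ) : ℂ :=
  iteratedDeriv n f 0 / n.factorial

open scoped Topology

/-!
For `t ≥ 0` the function `f · exp (-t g)` stays in `B`, because `Re g > 0`. The Cauchy estimate
applied to `f · (exp (-t g) - 1 + t g) = O(t²)` on a circle shows that its `n`-th coefficient is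
`{f}_n - t {f g}_n + O(t²)`, so maximality of `Re {f}_n` forces `Re {f g}_n ≥ 0`; by the Leibniz
rule `{f g}_n` is the Cauchy product `∑ {f}_{n-k} {g}_k`.
-/

lemma DifferentiableOn.contDiffAt_of_mem_nhds {s : Set ℂ} {h : ℂ → ℂ} {z : ℂ}
    {n : WithTop ℕ∞} (hh : DifferentiableOn ℂ h s) (hs : s ∈ 𝓝 z) : ContDiffAt ℂ n h z :=
  (hh.analyticAt hs).contDiffAt

section TaylorCoeff

variable {f g : ℂ → ℂ} {n : ℕ}

lemma taylorCoeff_sub (hf : ContDiffAt ℂ n f 0) (hg : ContDiffAt ℂ n g 0) :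
    taylorCoeff (fun z => f z - g z) n = taylorCoeff f n - taylorCoeff g n := by
  rw [taylorCoeff, taylorCoeff, taylorCoeff, iteratedDeriv_fun_sub hf hg, sub_div]

lemma taylorCoeff_const_mul (c : ℂ) :
    taylorCoeff (fun z => c * f z) n = c * taylorCoeff f n := by
  rw [taylorCoeff, taylorCoeff, iteratedDeriv_const_mul_field, mul_div_assoc]

lemma taylorCoeff_mul (hf : ContDiffAt ℂ n f 0) (hg : ContDiffAt ℂ n g 0) :
    taylorCoeff (fun z => f z * g z) n
      = ∑ k ∈ range (n + 1), taylorCoeff f k * taylorCoeff g (n - k) := by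
  rw [taylorCoeff, iteratedDeriv_fun_mul hf hg, sum_div]
  refine sum_congr rfl fun k hk => ?_
  have hkn := mem_range_succ_iff.mp hk
  have hchoose : (n.choose k : ℂ) ≠ 0 := by exact_mod_cast (Nat.choose_pos hkn).ne'
  rw [taylorCoeff, taylorCoeff, ← Nat.choose_mul_factorial_mul_factorial hkn]
  push_cast
  field_simp

lemma norm_taylorCoeff_le {R C : ℝ} (hR : 0 < R) (hf : DiffContOnCl ℂ f (ball 0 R))
    (hC : ∀ z ∈ sphere 0 R, ‖f z‖ ≤ C) : ‖taylorCoeff f n‖ ≤ C / R ^ n := by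
  rw [taylorCoeff, norm_div, Complex.norm_natCast, div_le_iff₀ (by positivity),
    div_mul_eq_mul_div, mul_comm]
  exact norm_iteratedDeriv_le_of_forall_mem_sphere_norm_le n hR hf hC

end TaylorCoeff

section Variation

variable {f g : ℂ → ℂ} {R : ℝ}

lemma taylorCoeff_mul_exp_sub (hR : 0 < R) (hf : DifferentiableOn ℂ f (ball 0 R))
    (hg : DifferentiableOn ℂ g (ball 0 R)) (n : ℕ) (t : ℂ) :
    taylorCoeff (fun z => f z * exp (t * g z)) n - taylorCoeff f n
        - t * taylorCoeff (fun z => f z * g z) n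
      = taylorCoeff (fun z => f z * (exp (t * g z) - 1 - t * g z)) n := by
  have hC {h : ℂ → ℂ} (hh : DifferentiableOn ℂ h (ball 0 R)) : ContDiffAt ℂ n h 0 :=
    hh.contDiffAt_of_mem_nhds (ball_mem_nhds 0 hR)
  have hexp : DifferentiableOn ℂ (fun z => exp (t * g z)) (ball 0 R) := (hg.const_mul t).cexp
  have hsplit : (fun z => f z * (exp (t * g z) - 1 - t * g z))
      = fun z => (f z * exp (t * g z) - f z) - t * (f z * g z) := by
    funext z
    ring
  rw [hsplit,
    taylorCoeff_sub (hC ((hf.fun_mul hexp).fun_sub hf)) (hC ((hf.fun_mul hg).const_mul t)),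
    taylorCoeff_sub (hC (hf.fun_mul hexp)) (hC hf), taylorCoeff_const_mul]

lemma isBigO_taylorCoeff_mul_exp_sub (hR : 0 < R) (hf : DifferentiableOn ℂ f (ball 0 R))
    (hg : DifferentiableOn ℂ g (ball 0 R)) (n : ℕ) :
    (fun t => taylorCoeff (fun z => f z * (exp (t * g z) - 1 - t * g z)) n)
      =O[𝓝 0] fun t => t ^ 2 := by
  set r := R / 2
  have hr : 0 < r := half_pos hR
  have hclosed : closedBall (0 : ℂ) r ⊆ ball 0 R := closedBall_subset_ball (half_lt_self hR)
  obtain ⟨Mf, hMf⟩ := (isCompact_sphere (0 : ℂ) r).exists_bound_of_continuousOn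
    (hf.continuousOn.mono (sphere_subset_closedBall.trans hclosed))
  obtain ⟨Mg, hMg⟩ := (isCompact_sphere (0 : ℂ) r).exists_bound_of_continuousOn
    (hg.continuousOn.mono (sphere_subset_closedBall.trans hclosed))
  have hMf0 : 0 ≤ Mf := (norm_nonneg _).trans (hMf r (by simp [hr.le]))
  have hsmall : ∀ᶠ t in 𝓝 (0 : ℂ), ‖t‖ * Mg ≤ 1 :=
    (by simpa using tendsto_norm_zero.mul_const Mg :
      Filter.Tendsto (fun t : ℂ => ‖t‖ * Mg) (𝓝 0) (𝓝 0)).eventually_le_const one_pos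
  refine .of_bound (Mf * Mg ^ 2 / r ^ n) (hsmall.mono fun t htMg => ?_)
  have hdiff : DifferentiableOn ℂ (fun z => f z * (exp (t * g z) - 1 - t * g z)) (ball 0 R) := by
    fun_prop
  have hcl : DiffContOnCl ℂ (fun z => f z * (exp (t * g z) - 1 - t * g z)) (ball 0 r) :=
    (hdiff.mono (by rwa [closure_ball (0 : ℂ) hr.ne'])).diffContOnCl
  refine (norm_taylorCoeff_le (C := Mf * Mg ^ 2 * ‖t‖ ^ 2) hr hcl fun z hz => ?_).trans_eq
    (by rw [norm_pow]; ring)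
  have htg : ‖t * g z‖ ≤ ‖t‖ * Mg := by
    rw [norm_mul]
    exact mul_le_mul_of_nonneg_left (hMg z hz) (norm_nonneg t)
  calc ‖f z * (exp (t * g z) - 1 - t * g z)‖
      ≤ Mf * ‖t * g z‖ ^ 2 := by
        rw [norm_mul]
        exact mul_le_mul (hMf z hz) (norm_exp_sub_one_sub_id_le (htg.trans htMg))
          (norm_nonneg _) hMf0
    _ ≤ Mf * (‖t‖ * Mg) ^ 2 := by gcongr
    _ = Mf * Mg ^ 2 * ‖t‖ ^ 2 := by ring

lemma hasDerivAt_taylorCoeff_mul_exp (hR : 0 < R) (hf : DifferentiableOn ℂ f (ball 0 R))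
    (hg : DifferentiableOn ℂ g (ball 0 R)) (n : ℕ) :
    HasDerivAt (fun t => taylorCoeff (fun z => f z * exp (t * g z)) n)
      (taylorCoeff (fun z => f z * g z) n) 0 := by
  have h0 : taylorCoeff (fun z => f z * exp (0 * g z)) n = taylorCoeff f n := by simp
  rw [hasDerivAt_iff_isLittleO]
  simp only [h0, sub_zero, smul_eq_mul, taylorCoeff_mul_exp_sub hR hf hg]
  exact (isBigO_taylorCoeff_mul_exp_sub hR hf hg n).trans_isLittleO
    (Asymptotics.isLittleO_pow_id one_lt_two)

end Variation

lemma HasDerivWithinAt.nonpos_of_isMaxOn {φ : ℝ → ℝ} {a x : ℝ}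
    (hφ : HasDerivWithinAt φ a (Set.Ici x) x) (hmax : IsMaxOn φ (Set.Ici x) x) : a ≤ 0 := by
  have h1 : (1 : ℝ) ∈ posTangentConeAt (Set.Ici x) x :=
    mem_posTangentConeAt_of_segment_subset (by simp [segment_eq_Icc, Set.Icc_subset_Ici_self])
  simpa using hmax.localize.hasFDerivWithinAt_nonpos hφ h1

lemma norm_exp_ofReal_mul_neg_le_one {s : ℝ} {w : ℂ} (hs : 0 ≤ s) (hw : 0 ≤ w.re) :
    ‖exp (s * -w)‖ ≤ 1 := by
  rw [norm_exp, Real.exp_le_one_iff, re_ofReal_mul, neg_re, mul_neg, neg_nonpos]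
  exact mul_nonneg hs hw

theorem stmt_10_general (n : ℕ) (f : ℂ → ℂ)
    (hf : DifferentiableOn ℂ f (ball (0 : ℂ) 1))
    (hfB : ∀ z ∈ ball (0 : ℂ) 1, 0 < ‖f z‖ ∧ ‖f z‖ ≤ 1)
    (hmax : ∀ q : ℂ → ℂ, DifferentiableOn ℂ q (ball (0 : ℂ) 1) →
      (∀ z ∈ ball (0 : ℂ) 1, 0 < ‖q z‖ ∧ ‖q z‖ ≤ 1) →
      (taylorCoeff q n).re ≤ (taylorCoeff f n).re) :
    ∀ g : ℂ → ℂ, DifferentiableOn ℂ g (ball (0 : ℂ) 1) →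
      (∀ z ∈ ball (0 : ℂ) 1, 0 < (g z).re) →
      0 ≤ (∑ k ∈ Finset.range (n + 1), taylorCoeff f (n - k) * taylorCoeff g k).re := by
  intro g hg hgpos
  have hball : ball (0 : ℂ) 1 ∈ 𝓝 0 := ball_mem_nhds 0 one_pos
  have hS : taylorCoeff (fun z => f z * -g z) n
      = -∑ k ∈ range (n + 1), taylorCoeff f (n - k) * taylorCoeff g k := by
    have hneg : (fun z => f z * -g z) = fun z => -1 * (g z * f z) := by
      funext z
      ring
    rw [hneg, taylorCoeff_const_mul, taylorCoeff_mul (hg.contDiffAt_of_mem_nhds hball)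
      (hf.contDiffAt_of_mem_nhds hball), neg_one_mul]
    simp only [mul_comm]
  have hderiv := (hasDerivAt_taylorCoeff_mul_exp (g := fun z => -g z) one_pos hf hg.neg n)
    |>.real_of_complex (z := 0)
  rw [hS, neg_re] at hderiv
  have hmaxOn : IsMaxOn (fun s : ℝ => (taylorCoeff (fun z => f z * exp (s * -g z)) n).re)
      (Set.Ici 0) 0 := by
    intro s hs
    refine (hmax _ (hf.fun_mul (hg.neg.const_mul _).cexp) fun z hz => ?_).trans_eq (by simp)
    have hexp := norm_exp_ofReal_mul_neg_le_one hs (hgpos z hz).le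
    rw [norm_mul]
    exact ⟨mul_pos (hfB z hz).1 (norm_pos_iff.mpr (exp_ne_zero _)),
      mul_le_one₀ (hfB z hz).2 (norm_nonneg _) hexp⟩
  linarith [hderiv.hasDerivWithinAt.nonpos_of_isMaxOn hmaxOn]

theorem stmt_10 (n : ℕ) (hn : 1 ≤ n) (f : ℂ → ℂ)
    (hf : DifferentiableOn ℂ f (ball (0 : ℂ) 1))
    (hfB : ∀ z ∈ ball (0 : ℂ) 1, 0 < ‖f z‖ ∧ ‖f z‖ ≤ 1)
    (hmax : ∀ q : ℂ → ℂ, DifferentiableOn ℂ q (ball (0 : ℂ) 1) →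
      (∀ z ∈ ball (0 : ℂ) 1, 0 < ‖q z‖ ∧ ‖q z‖ ≤ 1) →
      (taylorCoeff q n).re ≤ (taylorCoeff f n).re)
    (hfn : (taylorCoeff f n).im = 0 ∧ 0 < (taylorCoeff f n).re) :
    ∀ g : ℂ → ℂ, DifferentiableOn ℂ g (ball (0 : ℂ) 1) →
      (∀ z ∈ ball (0 : ℂ) 1, 0 < (g z).re) →
      0 ≤ (∑ k ∈ Finset.range (n + 1), taylorCoeff f (n - k) * taylorCoeff g k).re :=
  stmt_10_general n f hf hfB hmax
end

section
/- For z in the open unit disk, the function h(z) := (1 − zⁿ)/(1 + zⁿ) has positive real part, h(0) = 1, and the function f(z) := exp(−h(z)) satisfies 0 < |f(z)| ≤ 1 with Taylor expansion f(z) = e^{−1} + 2e^{−1}zⁿ + o(zⁿ). -/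
/-!
The map `w ↦ (1 - w) / (1 + w)` is the Cayley transform of the unit disc onto the right
half-plane: `Re ((1 - w) / (1 + w)) = (1 - ‖w‖²) / ‖1 + w‖²`. Hence `Re h > 0` on the disc and
`‖f‖ = exp (-Re h) ∈ (0, 1]`. For the coefficients write `f z = g (zⁿ)` with
`g w = exp (-(1 - w) / (1 + w))`. Taylor's theorem `g w = g 0 + g'(0) w + w² G(w)` with `G`
analytic gives `f z = g 0 + g'(0) zⁿ + z²ⁿ G(zⁿ)`, so up to order `2n > n` the coefficients of
`f` are those of `g 0 + g'(0) zⁿ`, where `g 0 = e⁻¹` and `g'(0) = 2e⁻¹`.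
-/

open Complex Metric Finset

open Filter

section CompPow

variable {𝕜 : Type*} [NontriviallyNormedField 𝕜]

lemma AnalyticAt.comp_pow_zero {g : 𝕜 → 𝕜} (hg : AnalyticAt 𝕜 g 0) {n : ℕ} (hn : n ≠ 0) :
    AnalyticAt 𝕜 (fun z => g (z ^ n)) 0 :=
  hg.comp_of_eq (analyticAt_id.pow n) (zero_pow hn)

lemma AnalyticAt.iteratedDeriv_comp_pow_zero [CharZero 𝕜] [CompleteSpace 𝕜] {g : 𝕜 → 𝕜}
    (hg : AnalyticAt 𝕜 g 0) {n k : ℕ} (hk : k < 2 * n) :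
    iteratedDeriv k (fun z => g (z ^ n)) 0 =
      iteratedDeriv k (fun z => g 0 + deriv g 0 * z ^ n) 0 := by
  have hn : n ≠ 0 := by omega
  obtain ⟨G, hG, hgG⟩ := hg.exists_eq_sum_add_pow_mul 2
  have hpoly : AnalyticAt 𝕜 (fun z : 𝕜 => g 0 + deriv g 0 * z ^ n) 0 := by fun_prop
  have hrem : AnalyticAt 𝕜 (fun z => g (z ^ n) - (g 0 + deriv g 0 * z ^ n)) 0 :=
    (hg.comp_pow_zero hn).sub hpoly
  have horder : ((2 * n : ℕ) : ℕ∞) ≤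
      analyticOrderAt (fun z => g (z ^ n) - (g 0 + deriv g 0 * z ^ n)) 0 := by
    refine (natCast_le_analyticOrderAt hrem).2 ⟨fun z => G (z ^ n), hG.comp_pow_zero hn, ?_⟩
    refine Eventually.of_forall fun z => ?_
    rw [hgG (z ^ n)]
    simp only [Finset.sum_range_succ, Finset.sum_range_zero, iteratedDeriv_zero,
      iteratedDeriv_one, pow_mul, smul_eq_mul]
    ring
  have hzero := (natCast_le_analyticOrderAt_iff_iteratedDeriv_eq_zero hrem).1 horder k hk
  rwa [iteratedDeriv_fun_sub (hg.comp_pow_zero hn).contDiffAt hpoly.contDiffAt,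
    sub_eq_zero] at hzero

end CompPow

lemma taylorCoeff_const_add_mul_pow (a b : ℂ) (n k : ℕ) :
    taylorCoeff (fun z => a + b * z ^ n) k =
      (if k = 0 then a else 0) + (if k = n then b else 0) := by
  rw [taylorCoeff, iteratedDeriv_fun_add (by fun_prop) (by fun_prop), iteratedDeriv_const,
    iteratedDeriv_const_mul_field, iteratedDeriv_fun_pow_zero]
  split_ifs <;> simp_all [Nat.factorial_ne_zero]

lemma taylorCoeff_comp_pow {g : ℂ → ℂ} (hg : AnalyticAt ℂ g 0) {n k : ℕ} (hk : k < 2 * n) :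
    taylorCoeff (fun z => g (z ^ n)) k =
      (if k = 0 then g 0 else 0) + (if k = n then deriv g 0 else 0) := by
  rw [← taylorCoeff_const_add_mul_pow, taylorCoeff, taylorCoeff,
    hg.iteratedDeriv_comp_pow_zero hk]

lemma re_one_sub_div_one_add_pos {w : ℂ} (hw : ‖w‖ < 1) : 0 < ((1 - w) / (1 + w)).re := by
  have hden : 1 + w ≠ 0 := by
    intro h0
    rw [eq_neg_of_add_eq_zero_right h0, norm_neg, norm_one] at hw
    exact lt_irrefl 1 hw
  have hnum : (1 - w).re * (1 + w).re + (1 - w).im * (1 + w).im = 1 - ‖w‖ ^ 2 := by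
    simp only [sub_re, add_re, one_re, sub_im, add_im, one_im, ← normSq_eq_norm_sq, normSq_apply]
    ring
  rw [div_re, ← add_div, hnum]
  exact div_pos (by nlinarith [norm_nonneg w]) (normSq_pos.2 hden)

lemma hasDerivAt_exp_neg_one_sub_div_one_add :
    HasDerivAt (fun w : ℂ => exp (-((1 - w) / (1 + w)))) (2 * exp (-1)) 0 := by
  have h : HasDerivAt (fun w : ℂ => -((1 - w) / (1 + w))) 2 0 := by
    refine (((hasDerivAt_id' (0 : ℂ)).const_sub 1).fun_div
      ((hasDerivAt_id' (0 : ℂ)).const_add 1) (by norm_num)).fun_neg.congr_deriv ?_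
    norm_num
  simpa [mul_comm] using h.cexp

theorem stmt_13 (n : ℕ) (hn : 1 ≤ n) (h f : ℂ → ℂ)
    (hh : ∀ z : ℂ, h z = (1 - z ^ n) / (1 + z ^ n))
    (hf : ∀ z : ℂ, f z = Complex.exp (-h z)) :
    (∀ z ∈ ball (0 : ℂ) 1, 0 < (h z).re) ∧
    h 0 = 1 ∧
    (∀ z ∈ ball (0 : ℂ) 1, 0 < ‖f z‖ ∧ ‖f z‖ ≤ 1) ∧
    taylorCoeff f 0 = Complex.exp (-1) ∧
    (∀ k, 1 ≤ k → k ≤ n - 1 → taylorCoeff f k = 0) ∧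
    taylorCoeff f n = 2 * Complex.exp (-1) := by
  set g : ℂ → ℂ := fun w => exp (-((1 - w) / (1 + w)))
  have hfg : f = fun z => g (z ^ n) := funext fun z => by rw [hf, hh]
  have hg : AnalyticAt ℂ g 0 := by
    refine ((analyticAt_const.sub analyticAt_id).div
      (analyticAt_const.add analyticAt_id) ?_).neg.cexp
    norm_num
  have hg0 : g 0 = exp (-1) := by simp [g]
  have hg'0 : deriv g 0 = 2 * exp (-1) := hasDerivAt_exp_neg_one_sub_div_one_add.deriv
  have hre : ∀ z ∈ ball (0 : ℂ) 1, 0 < (h z).re := fun z hz => by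
    rw [hh]
    refine re_one_sub_div_one_add_pos ?_
    rw [norm_pow]
    exact pow_lt_one₀ (norm_nonneg z) (mem_ball_zero_iff.1 hz) (by omega)
  refine ⟨hre, by simp [hh, zero_pow (by omega : n ≠ 0)], fun z hz => ?_, ?_,
    fun k hk1 hkn => ?_, ?_⟩
  · rw [hf, norm_exp, neg_re]
    exact ⟨Real.exp_pos _, Real.exp_le_one_iff.2 (by linarith [hre z hz])⟩
  · rw [hfg, taylorCoeff_comp_pow hg (by omega)]
    simp [hg0, show (0 : ℕ) ≠ n by omega]
  · rw [hfg, taylorCoeff_comp_pow hg (by omega)]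
    simp [show k ≠ 0 by omega, show k ≠ n by omega]
  · rw [hfg, taylorCoeff_comp_pow hg (by omega)]
    simp [hg'0, show n ≠ 0 by omega]
end
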